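/- Fix s ≥ 1 and distinct ζ₀, …, ζ_{s−1} ∈ 𝕋, let g ∈ H², a₀, …, a_{s−1} ∈ ℂ, set q(z) = ∏_k(z − ζ_k) and f(z) = ∑_{j<s} a_j z^j + q(z)g(z) on 𝔻. Then for every 0 ≤ k ≤ s−1 the Taylor series of f converges at ζ_k, and ∑_{j=0}^∞ f̂(j) ζ_k^j = ∑_{j<s} a_j ζ_k^j, which is the radial limit lim_{r→1⁻} f(rζ_k). -/

import Mathlib

open Complex Filter Metric Topology

/-! Write `q(z) = (z - ζₖ) r(z)`. Multiplying a power series by `z - ζ` turns its coefficients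
`cₙ` into `cₙ₋₁ - ζ cₙ`, which preserves `cₙ → 0`; hence the coefficients `hₙ` of `r g` tend
to `0`, since those of `g ∈ H²` do. The coefficients of `f` are `aₙ + hₙ₋₁ - ζₖ hₙ`, and at
`z = ζₖ` the second part telescopes: its `N`-th partial sum is `-h_{N-1} ζₖᴺ → 0`. So the Taylor
series of `f` converges at `ζₖ` to `∑ aⱼ ζₖʲ`, and Abel's theorem gives the radial limit. -/

lemma hasFPowerSeriesOnBall_ofScalars_of_hasSum {F : ℂ → ℂ} {c : ℕ → ℂ} {r : NNReal}
    (hr : 0 < r) (hc : ∀ z ∈ ball (0 : ℂ) r, HasSum (fun n => c n * z ^ n) (F z)) :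
    HasFPowerSeriesOnBall F (FormalMultilinearSeries.ofScalars ℂ c) 0 r where
  r_le := by
    refine ENNReal.le_of_forall_nnreal_lt fun t ht => ?_
    have ht_mem : ((t : ℝ) : ℂ) ∈ ball (0 : ℂ) r := by
      simpa [abs_of_nonneg t.coe_nonneg] using ht
    refine FormalMultilinearSeries.le_radius_of_tendsto _ (l := 0) ?_
    simpa [FormalMultilinearSeries.ofScalars_norm, abs_of_nonneg t.coe_nonneg] using
      (hc _ ht_mem).summable.tendsto_atTop_zero.norm
  r_pos := by exact_mod_cast hr
  hasSum {y} hy := by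
    rw [Metric.eball_coe] at hy
    simpa [FormalMultilinearSeries.ofScalars_apply_eq, mul_comm] using hc y hy

lemma eq_of_hasSum_mul_pow {F : ℂ → ℂ} {c d : ℕ → ℂ} {r : NNReal} (hr : 0 < r)
    (hc : ∀ z ∈ ball (0 : ℂ) r, HasSum (fun n => c n * z ^ n) (F z))
    (hd : ∀ z ∈ ball (0 : ℂ) r, HasSum (fun n => d n * z ^ n) (F z)) :
    c = d :=
  FormalMultilinearSeries.ofScalars_series_injective (𝕜 := ℂ) ℂ <|
    (hasFPowerSeriesOnBall_ofScalars_of_hasSum hr hc).hasFPowerSeriesAt.eq_formalMultilinearSeries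
      (hasFPowerSeriesOnBall_ofScalars_of_hasSum hr hd).hasFPowerSeriesAt

section MulXSub

variable {R : Type*} [CommRing R]

def coeffMulXSub (ζ : R) (c : ℕ → R) : ℕ → R
  | 0 => -(ζ * c 0)
  | n + 1 => c n - ζ * c (n + 1)

lemma sum_range_succ_coeffMulXSub_mul_pow (ζ : R) (c : ℕ → R) (N : ℕ) :
    ∑ n ∈ Finset.range (N + 1), coeffMulXSub ζ c n * ζ ^ n = -(c N * ζ ^ (N + 1)) := by
  induction N with
  | zero => simp [coeffMulXSub, mul_comm]
  | succ N ih =>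
    rw [Finset.sum_range_succ, ih, coeffMulXSub]
    ring

variable [TopologicalSpace R] [IsTopologicalRing R]

lemma hasSum_coeffMulXSub_mul_pow {c : ℕ → R} {z H : R} (ζ : R)
    (hH : HasSum (fun n => c n * z ^ n) H) :
    HasSum (fun n => coeffMulXSub ζ c n * z ^ n) ((z - ζ) * H) := by
  rw [← hasSum_nat_add_iff' 1]
  have hshift : HasSum (fun n => c (n + 1) * z ^ (n + 1)) (H - c 0) := by
    simpa using (hasSum_nat_add_iff' 1).mpr hH
  convert (hH.mul_left z).sub (hshift.mul_left ζ) using 1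
  · ext n
    simp only [coeffMulXSub]
    ring
  · simp only [Finset.range_one, Finset.sum_singleton, coeffMulXSub, pow_zero]
    ring

lemma tendsto_coeffMulXSub {c : ℕ → R} (ζ : R) (hc : Tendsto c atTop (𝓝 0)) :
    Tendsto (coeffMulXSub ζ c) atTop (𝓝 0) := by
  rw [← tendsto_add_atTop_iff_nat 1]
  simpa [coeffMulXSub] using hc.sub ((tendsto_add_atTop_iff_nat 1).mpr hc |>.const_mul ζ)

lemma exists_tendsto_zero_coeff_prod_mul {ι : Type*} (S : Finset ι) (ζ : ι → R)
    {U : Set R} {G : R → R} {c : ℕ → R} (hc : Tendsto c atTop (𝓝 0))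
    (hG : ∀ z ∈ U, HasSum (fun n => c n * z ^ n) (G z)) :
    ∃ c' : ℕ → R, Tendsto c' atTop (𝓝 0) ∧
      ∀ z ∈ U, HasSum (fun n => c' n * z ^ n) ((∏ j ∈ S, (z - ζ j)) * G z) := by
  classical
  induction S using Finset.induction_on with
  | empty => exact ⟨c, hc, by simpa using hG⟩
  | insert i S hi ih =>
    obtain ⟨c', hc', hG'⟩ := ih
    refine ⟨coeffMulXSub (ζ i) c', tendsto_coeffMulXSub _ hc', fun z hz => ?_⟩
    rw [Finset.prod_insert hi, mul_assoc]
    exact hasSum_coeffMulXSub_mul_pow _ (hG' z hz)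

end MulXSub

lemma tendsto_sum_range_coeffMulXSub_mul_pow {R : Type*} [NormedCommRing R] [NormOneClass R]
    {c : ℕ → R} {ζ : R} (hζ : ‖ζ‖ ≤ 1) (hc : Tendsto c atTop (𝓝 0)) :
    Tendsto (fun N => ∑ n ∈ Finset.range N, coeffMulXSub ζ c n * ζ ^ n) atTop (𝓝 0) := by
  rw [← tendsto_add_atTop_iff_nat 1]
  simp only [sum_range_succ_coeffMulXSub_mul_pow]
  refine squeeze_zero_norm (fun N => ?_) (tendsto_zero_iff_norm_tendsto_zero.mp hc)
  rw [norm_neg]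
  calc ‖c N * ζ ^ (N + 1)‖ ≤ ‖c N‖ * ‖ζ‖ ^ (N + 1) := by
        grw [norm_mul_le, norm_pow_le]
    _ ≤ ‖c N‖ := mul_le_of_le_one_right (norm_nonneg _) (pow_le_one₀ (norm_nonneg _) hζ)

lemma tendsto_zero_of_summable_sq_norm {E : Type*} [SeminormedAddCommGroup E] {c : ℕ → E} (hc : Summable fun n => ‖c n‖ ^ 2) :
    Tendsto c atTop (𝓝 0) := by
  rw [tendsto_zero_iff_norm_tendsto_zero]
  simpa [Function.comp_def, Real.sqrt_sq (norm_nonneg _)] using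
    (Real.continuous_sqrt.tendsto 0).comp hc.tendsto_atTop_zero

def extendByZero {M : Type*} [Zero M] {s : ℕ} (a : Fin s → M) (n : ℕ) : M :=
  if h : n < s then a ⟨n, h⟩ else 0

lemma hasSum_extendByZero_mul_pow {R : Type*} [Semiring R] [TopologicalSpace R] {s : ℕ}
    (a : Fin s → R) (z : R) :
    HasSum (fun n => extendByZero a n * z ^ n) (∑ j : Fin s, a j * z ^ (j : ℕ)) := by
  have hsum : ∑ j : Fin s, a j * z ^ (j : ℕ) = ∑ n ∈ Finset.range s, extendByZero a n * z ^ n := by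
    rw [← Fin.sum_univ_eq_sum_range]
    simp [extendByZero]
  rw [hsum]
  refine hasSum_sum_of_ne_finset_zero fun n hn => ?_
  simp [extendByZero, Finset.mem_range.not.mp hn]

lemma tendsto_radial_of_tendsto_sum_range {F : ℂ → ℂ} {c : ℕ → ℂ} {ζ l : ℂ}
    (hF : ∀ z ∈ ball (0 : ℂ) 1, HasSum (fun n => c n * z ^ n) (F z)) (hζ : ‖ζ‖ = 1)
    (hl : Tendsto (fun N => ∑ n ∈ Finset.range N, c n * ζ ^ n) atTop (𝓝 l)) :
    Tendsto (fun r : ℝ => F (r * ζ)) (𝓝[<] 1) (𝓝 l) := by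
  have habel := tendsto_tsum_powerSeries_nhdsWithin_lt (f := fun n => c n * ζ ^ n) hl
  rw [tendsto_map'_iff] at habel
  refine habel.congr' ?_
  filter_upwards [Ioo_mem_nhdsLT (show (0 : ℝ) < 1 by norm_num)] with r hr
  have hmem : (r : ℂ) * ζ ∈ ball (0 : ℂ) 1 := by
    simpa [hζ, abs_of_pos hr.1] using hr.2
  simp only [Function.comp_apply, ← (hF _ hmem).tsum_eq, mul_pow]
  exact tsum_congr fun n => by ring

theorem boundary_values_of_Dmu_functions_general
    (s : ℕ) (ζ : Fin s → ℂ)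
    (hζ : ∀ k, ‖ζ k‖ = 1)
    (g : ℂ → ℂ) (gh : ℕ → ℂ)
    (hg : ∀ z ∈ Metric.ball (0 : ℂ) 1, HasSum (fun n => gh n * z ^ n) (g z))
    (hg2 : Summable (fun n => ‖gh n‖ ^ 2))
    (a : Fin s → ℂ) (f : ℂ → ℂ)
    (hf : ∀ z ∈ Metric.ball (0 : ℂ) 1,
      f z = (∑ j : Fin s, a j * z ^ (j : ℕ)) + (∏ k, (z - ζ k)) * g z)
    (fh : ℕ → ℂ)
    (hfh : ∀ z ∈ Metric.ball (0 : ℂ) 1, HasSum (fun n => fh n * z ^ n) (f z)) :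
    ∀ k : Fin s,
      Tendsto (fun N => ∑ j ∈ Finset.range N, fh j * ζ k ^ j) atTop
        (𝓝 (∑ j : Fin s, a j * ζ k ^ (j : ℕ))) ∧
      Tendsto (fun r : ℝ => f ((r : ℂ) * ζ k)) (𝓝[<] (1 : ℝ))
        (𝓝 (∑ j : Fin s, a j * ζ k ^ (j : ℕ))) := by
  intro k
  obtain ⟨h, h_tendsto, h_hasSum⟩ := exists_tendsto_zero_coeff_prod_mul (Finset.univ.erase k) ζ
    (tendsto_zero_of_summable_sq_norm hg2) hg
  have hf_coeff : ∀ z ∈ ball (0 : ℂ) 1,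
      HasSum (fun n => (extendByZero a n + coeffMulXSub (ζ k) h n) * z ^ n) (f z) := by
    intro z hz
    rw [hf z hz, ← Finset.mul_prod_erase _ _ (Finset.mem_univ k), mul_assoc]
    simpa only [add_mul] using
      (hasSum_extendByZero_mul_pow a z).add (hasSum_coeffMulXSub_mul_pow (ζ k) (h_hasSum z hz))
  obtain rfl := eq_of_hasSum_mul_pow one_pos hfh hf_coeff
  have h_partial : Tendsto (fun N => ∑ j ∈ Finset.range N,
      (extendByZero a j + coeffMulXSub (ζ k) h j) * ζ k ^ j) atTop
      (𝓝 (∑ j : Fin s, a j * ζ k ^ (j : ℕ))) := by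
    simpa only [add_mul, Finset.sum_add_distrib, add_zero] using
      (hasSum_extendByZero_mul_pow a (ζ k)).tendsto_sum_nat.add
        (tendsto_sum_range_coeffMulXSub_mul_pow (hζ k).le h_tendsto)
  exact ⟨h_partial, tendsto_radial_of_tendsto_sum_range hfh (hζ k) h_partial⟩

/-- For `s ≥ 1`, distinct `ζ₀, …, ζ_{s-1} ∈ 𝕋`, `g ∈ H²`,
`q(z) = ∏ (z - ζ_k)` and `f(z) = ∑_{j<s} a_j z^j + q(z) g(z)` on `𝔻`:  for every
`0 ≤ k ≤ s-1` the Taylor series of `f` converges at `ζ_k` with sum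
`∑_{j<s} a_j ζ_k^j`, which is also the radial limit of `f` at `ζ_k`. -/
theorem boundary_values_of_Dmu_functions
    (s : ℕ) (hs : 1 ≤ s) (ζ : Fin s → ℂ)
    (hζ : ∀ k, ‖ζ k‖ = 1) (hinj : Function.Injective ζ)
    (g : ℂ → ℂ) (gh : ℕ → ℂ)
    (hg : ∀ z ∈ Metric.ball (0 : ℂ) 1, HasSum (fun n => gh n * z ^ n) (g z))
    (hg2 : Summable (fun n => ‖gh n‖ ^ 2))
    (a : Fin s → ℂ) (f : ℂ → ℂ)
    (hf : ∀ z ∈ Metric.ball (0 : ℂ) 1,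
      f z = (∑ j : Fin s, a j * z ^ (j : ℕ)) + (∏ k, (z - ζ k)) * g z)
    (fh : ℕ → ℂ)
    (hfh : ∀ z ∈ Metric.ball (0 : ℂ) 1, HasSum (fun n => fh n * z ^ n) (f z)) :
    ∀ k : Fin s,
      Tendsto (fun N => ∑ j ∈ Finset.range N, fh j * ζ k ^ j) atTop
        (𝓝 (∑ j : Fin s, a j * ζ k ^ (j : ℕ))) ∧
      Tendsto (fun r : ℝ => f ((r : ℂ) * ζ k)) (𝓝[<] (1 : ℝ))
        (𝓝 (∑ j : Fin s, a j * ζ k ^ (j : ℕ))) :=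
  boundary_values_of_Dmu_functions_general s ζ hζ g gh hg hg2 a f hf fh hfh
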